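/- arXiv:1404.2371 — 4 statements merged into one kernel-verified Lean document; each statement's English description precedes it below -/
import Mathlib

section
/- Let n ≥ 2 be an integer and let q = (q_0,…,q_{2n}) be a real coefficient vector such that for all reals L, U, a with 0 < L ≤ a < U and x = a^n one has a ≤ U + (x − U^n)/(∑_{i=0}^{n-1} q_{n+1+i} U^{n-1-i} L^i). Then for all reals L, U, a with 0 < L ≤ a < U, one has 1/(∑_{i=0}^{n-1} U^{n-1-i} a^i) ≥ 1/(∑_{i=0}^{n-1} q_{n+1+i} U^{n-1-i} L^i). -/
/-! Write `S = ∑ U^(n-1-i) a^i`, so that `a^n - U^n = (a - U) S` and the hypothesis reads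
`a ≤ U - (U - a) S / Q` with `Q` the normalized denominator. If `Q ≤ 0` then `1/Q ≤ 0 < 1/S`;
otherwise dividing by `U - a > 0` gives `S / Q ≤ 1`, i.e. `S ≤ Q`, hence `1/Q ≤ 1/S`. -/

open Finset

theorem sub_mul_sum_pow_mul_pow {R : Type*} [CommRing R] (x y : R) (n : ℕ) :
    (x - y) * ∑ i ∈ range n, y ^ (n - 1 - i) * x ^ i = x ^ n - y ^ n := by
  simp_rw [mul_comm (x - y), mul_comm (y ^ _)]
  exact geom_sum₂_mul x y n

theorem sum_pow_mul_pow_pos {R : Type*} [Semiring R] [PartialOrder R] [IsStrictOrderedRing R]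
    {x y : R} (hx : 0 < x) (hy : 0 < y) {n : ℕ} (hn : 0 < n) :
    0 < ∑ i ∈ range n, y ^ (n - 1 - i) * x ^ i :=
  sum_pos (fun _ _ ↦ mul_pos (pow_pos hy _) (pow_pos hx _)) (nonempty_range_iff.mpr hn.ne')

theorem one_div_le_one_div_of_le_add_sub_mul_div {a U S Q : ℝ} (haU : a < U) (hS : 0 < S)
    (h : a ≤ U + (a - U) * S / Q) : 1 / Q ≤ 1 / S := by
  rcases le_or_gt Q 0 with hQ | hQ
  · exact (one_div_nonpos.mpr hQ).trans (one_div_pos.mpr hS).le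
  · have hSQ : (U - a) * (S / Q) ≤ (U - a) * 1 := by
      rw [mul_div_assoc] at h
      linarith
    exact one_div_le_one_div_of_le hS
      ((div_le_one hQ).mp (le_of_mul_le_mul_left hSQ (sub_pos.mpr haU)))

theorem upper_denominator_bound (n : ℕ) (hn : 2 ≤ n) (q : ℕ → ℝ)
    (h : ∀ L U a : ℝ, 0 < L → L ≤ a → a < U →
      a ≤ U + (a ^ n - U ^ n) / (∑ i ∈ Finset.range n, q (n+1+i) * U ^ (n-1-i) * L ^ i)) :
    ∀ L U a : ℝ, 0 < L → L ≤ a → a < U →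
      1 / (∑ i ∈ Finset.range n, U ^ (n-1-i) * a ^ i) ≥
      1 / (∑ i ∈ Finset.range n, q (n+1+i) * U ^ (n-1-i) * L ^ i) := by
  intro L U a hL hLa haU
  have ha : 0 < a := hL.trans_le hLa
  refine one_div_le_one_div_of_le_add_sub_mul_div haU
    (sum_pow_mul_pow_pos ha (ha.trans haU) (by omega)) ?_
  rw [sub_mul_sum_pow_mul_pow]
  exact h L U a hL hLa haU
end

section
/- Let n ≥ 2 be an integer and let p = (p_0,…,p_{2n}) and q = (q_0,…,q_{2n}) be real coefficient vectors such that the n-th degree map R_{p,q} is contracting. Then for all reals L, U, a with 0 < L ≤ a ≤ U and x = a^n, the output interval of the Secant–Newton map is contained in the output interval of R_{p,q}: writing [L′,U′] = R_{p,q}([L,U],x), L* = L + (x − L^n)/(∑_{i=0}^{n-1} L^{n-1-i} U^i) and U* = U + (x − U^n)/(n·U^{n-1}), one has L′ ≤ L* and U* ≤ U′. -/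
/-- Lower output `L'` of the n-th degree map `R_{p,q}` on `([L,U], x)`. -/
noncomputable def lowerOut (n : ℕ) (p : ℕ → ℝ) (L U x : ℝ) : ℝ :=
  L + (x + ∑ i ∈ Finset.range (n+1), p i * L ^ (n - i) * U ^ i) /
      (∑ i ∈ Finset.range n, p (n+1+i) * L ^ (n-1-i) * U ^ i)

/-- Upper output `U'` of the n-th degree map `R_{p,q}` on `([L,U], x)`. -/
noncomputable def upperOut (n : ℕ) (q : ℕ → ℝ) (L U x : ℝ) : ℝ :=
  U + (x + ∑ i ∈ Finset.range (n+1), q i * U ^ (n - i) * L ^ i) /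
      (∑ i ∈ Finset.range n, q (n+1+i) * U ^ (n-1-i) * L ^ i)

/-- The n-th degree map `R_{p,q}` is contracting:
for all `0 < L ≤ a ≤ U` with `x = a^n`, `L ≤ L' ≤ a ≤ U' ≤ U`. -/
def Contracting (n : ℕ) (p q : ℕ → ℝ) : Prop :=
  ∀ L U a : ℝ, 0 < L → L ≤ a → a ≤ U →
    L ≤ lowerOut n p L U (a ^ n) ∧ lowerOut n p L U (a ^ n) ≤ a ∧
    a ≤ upperOut n q L U (a ^ n) ∧ upperOut n q L U (a ^ n) ≤ U

/-! Contracting at `a = L` forces the lower map to fix `L`, and contracting at `a = U` forces the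
upper map to fix `U`. Since both outputs are affine in `x`, this gives
`L' = L + (x - L ^ n) / D` and `U' = U + (x - U ^ n) / E` for some `D`, `E`.
Contracting at `a = U` then says `1 / D` is at most the slope `(U - L) / (U ^ n - L ^ n)` of the
secant, which is the reciprocal of `∑ L ^ (n-1-i) U ^ i`. Contracting at every `b ∈ [L, U]` says
that `b ↦ b ^ n / E - b` is minimal on `[L, U]` at `U`, so its derivative `n U ^ (n-1) / E - 1`
there is nonpositive: `1 / E` is at most the Newton slope `1 / (n U ^ (n-1))`. -/

open Finset Set

lemma div_eq_sub_div_of_add_div_eq_zero {c P D : ℝ} (h : (c + P) / D = 0) (x : ℝ) :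
    (x + P) / D = (x - c) / D := by
  linear_combination h

lemma div_le_div_of_le_of_div_le_div {s t D S : ℝ} (hs : 0 ≤ s) (hst : s ≤ t)
    (h : t / D ≤ t / S) : s / D ≤ s / S := by
  rcases hs.eq_or_lt with rfl | hs
  · simp
  simp only [div_eq_mul_inv] at h ⊢
  exact mul_le_mul_of_nonneg_left (le_of_mul_le_mul_left h (hs.trans_le hst)) hs.le

lemma IsMinOn.hasDerivAt_nonpos_of_right_endpoint {g : ℝ → ℝ} {g' L U : ℝ} (hLU : L < U)
    (h : IsMinOn g (Icc L U) U) (hg : HasDerivAt g g' U) : g' ≤ 0 := by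
  have hcone : L - U ∈ posTangentConeAt (Icc L U) U :=
    sub_mem_posTangentConeAt_of_segment_subset
      ((segment_symm ℝ U L).trans_subset (segment_subset_Icc hLU.le))
  have hdir := h.localize.hasFDerivWithinAt_nonneg hg.hasFDerivAt.hasFDerivWithinAt hcone
  simp only [ContinuousLinearMap.toSpanSingleton_apply, smul_eq_mul] at hdir
  exact nonpos_of_mul_nonneg_right hdir (sub_neg.mpr hLU)

lemma sum_pow_mul_pow_mul_sub (n : ℕ) (L U : ℝ) :
    (∑ i ∈ range n, L ^ (n - 1 - i) * U ^ i) * (U - L) = U ^ n - L ^ n := by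
  simpa only [mul_comm] using geom_sum₂_mul U L n

namespace Contracting

variable {n : ℕ} {p q : ℕ → ℝ} {L U : ℝ}

lemma exists_lowerOut_eq (hc : Contracting n p q) (hL : 0 < L) (hLU : L ≤ U) :
    ∃ D, ∀ x, lowerOut n p L U x = L + (x - L ^ n) / D := by
  obtain ⟨h₁, h₂, -⟩ := hc L U L hL le_rfl hLU
  unfold lowerOut at h₁ h₂ ⊢
  have hfix := add_eq_left.mp (le_antisymm h₂ h₁)
  exact ⟨_, fun x ↦ by rw [div_eq_sub_div_of_add_div_eq_zero hfix]⟩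

lemma exists_upperOut_eq (hc : Contracting n p q) (hL : 0 < L) (hLU : L ≤ U) :
    ∃ E, ∀ x, upperOut n q L U x = U + (x - U ^ n) / E := by
  obtain ⟨-, -, h₁, h₂⟩ := hc L U U hL hLU le_rfl
  unfold upperOut at h₁ h₂ ⊢
  have hfix := add_eq_left.mp (le_antisymm h₂ h₁)
  exact ⟨_, fun x ↦ by rw [div_eq_sub_div_of_add_div_eq_zero hfix]⟩

variable {a : ℝ}

lemma lowerOut_le_secant (hc : Contracting n p q) (hn : n ≠ 0) (hL : 0 < L) (hLa : L ≤ a)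
    (haU : a ≤ U) :
    lowerOut n p L U (a ^ n) ≤ L + (a ^ n - L ^ n) / ∑ i ∈ range n, L ^ (n - 1 - i) * U ^ i := by
  have ha := hL.trans_le hLa
  have hU := ha.trans_le haU
  have hLU := hLa.trans haU
  obtain ⟨D, hD⟩ := hc.exists_lowerOut_eq hL hLU
  have hS : 0 < ∑ i ∈ range n, L ^ (n - 1 - i) * U ^ i :=
    sum_pos (fun i _ ↦ by positivity) (nonempty_range_iff.mpr hn)
  have hsecant : (U ^ n - L ^ n) / ∑ i ∈ range n, L ^ (n - 1 - i) * U ^ i = U - L := by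
    rw [← sum_pow_mul_pow_mul_sub, mul_div_cancel_left₀ _ hS.ne']
  have hUU := (hc L U U hL hLU le_rfl).2.1
  rw [hD] at hUU ⊢
  gcongr L + ?_
  refine div_le_div_of_le_of_div_le_div (t := U ^ n - L ^ n) (sub_nonneg.mpr (by gcongr))
    (by gcongr) ?_
  rw [hsecant]
  linarith

lemma newton_le_upperOut (hc : Contracting n p q) (hn : n ≠ 0) (hL : 0 < L) (hLa : L ≤ a)
    (haU : a ≤ U) :
    U + (a ^ n - U ^ n) / ((n : ℝ) * U ^ (n - 1)) ≤ upperOut n q L U (a ^ n) := by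
  have ha := hL.trans_le hLa
  obtain ⟨E, hE⟩ := hc.exists_upperOut_eq hL (hLa.trans haU)
  rcases (hLa.trans haU).eq_or_lt with rfl | hLU
  · simp [hE, le_antisymm haU hLa]
  have hU := hL.trans hLU
  have hNewton : 0 < (n : ℝ) * U ^ (n - 1) := by positivity
  have hmin : IsMinOn (fun b ↦ E⁻¹ * b ^ n - b) (Icc L U) U := isMinOn_iff.mpr fun b hb ↦ by
    have hb' := (hc L U b hL hb.1 hb.2).2.2.1
    rw [hE, div_eq_mul_inv] at hb'
    linarith
  have hslope := hmin.hasDerivAt_nonpos_of_right_endpoint hLU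
    (((hasDerivAt_pow n U).const_mul E⁻¹).sub (hasDerivAt_id U))
  have hinv : E⁻¹ ≤ ((n : ℝ) * U ^ (n - 1))⁻¹ := by
    rw [← one_div ((n : ℝ) * _), le_div_iff₀ hNewton]
    linarith
  rw [hE]
  gcongr U + ?_
  simp only [div_eq_mul_inv]
  exact mul_le_mul_of_nonpos_left hinv (sub_nonpos.mpr (by gcongr))

end Contracting

theorem secant_newton_optimal (n : ℕ) (hn : 2 ≤ n) (p q : ℕ → ℝ)
    (hc : Contracting n p q) :
    ∀ L U a : ℝ, 0 < L → L ≤ a → a ≤ U →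
      lowerOut n p L U (a ^ n) ≤
        L + (a ^ n - L ^ n) / (∑ i ∈ Finset.range n, L ^ (n-1-i) * U ^ i) ∧
      U + (a ^ n - U ^ n) / ((n : ℝ) * U ^ (n-1)) ≤ upperOut n q L U (a ^ n) := by
  intro L U a hL hLa haU
  exact ⟨hc.lowerOut_le_secant (by omega) hL hLa haU, hc.newton_le_upperOut (by omega) hL hLa haU⟩
end

section
/- Let n ≥ 2 be an integer and let p = (p_0,…,p_{2n}) and q = (q_0,…,q_{2n}) be real coefficient vectors such that the n-th degree map R_{p,q} is contracting and (p_{n+1},…,p_{2n}) ≠ (1,1,…,1). Then for all reals L, U, a with 0 < L ≤ a ≤ U, x = a^n, and (x − L^n)·(∑_{i=0}^{n-1} (p_{n+1+i} − 1) L^{n-1-i} U^i) ≠ 0, the lower output L′ of R_{p,q} is strictly less than the Secant–Newton lower output L* = L + (x − L^n)/(∑_{i=0}^{n-1} L^{n-1-i} U^i); in particular the Secant–Newton output interval is a proper subset of the output interval of R_{p,q}. -/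
/-!
Contraction at `a = L` forces `L' = L`, i.e. the numerator of `L'` equals `x - L ^ n`; so
`L' = L + (x - L ^ n) / D`, where `D` is the lower denominator. Contraction at `a = U` then says
that `D` is at least the secant slope `(U ^ n - L ^ n) / (U - L) = ∑ L ^ (n-1-i) U ^ i` of the
Secant–Newton map, and the hypothesis makes this strict. Symmetrically `U' = U + (x - U ^ n) / E`,
and contraction at every `b ∈ [L, U)` bounds `E` below by the secant slope
`(U ^ n - b ^ n) / (U - b)`, hence by its limit `n U ^ (n-1)`, the Newton slope.
-/

open Finset

noncomputable def lowerDen (n : ℕ) (p : ℕ → ℝ) (L U : ℝ) : ℝ :=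
  ∑ i ∈ range n, p (n+1+i) * L ^ (n-1-i) * U ^ i

noncomputable def upperDen (n : ℕ) (q : ℕ → ℝ) (L U : ℝ) : ℝ :=
  ∑ i ∈ range n, q (n+1+i) * U ^ (n-1-i) * L ^ i

noncomputable def secantDen (n : ℕ) (L U : ℝ) : ℝ :=
  ∑ i ∈ range n, L ^ (n-1-i) * U ^ i

lemma secantDen_mul_sub (n : ℕ) (L U : ℝ) : secantDen n L U * (U - L) = U ^ n - L ^ n := by
  rw [← geom_sum₂_mul]
  simp only [secantDen, mul_comm]

lemma secantDen_pos {n : ℕ} {L U : ℝ} (hn : n ≠ 0) (hL : 0 < L) (hU : 0 < U) :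
    0 < secantDen n L U :=
  sum_pos (fun i _ => by positivity) (nonempty_range_iff.2 hn)

lemma lowerDen_sub_secantDen (n : ℕ) (p : ℕ → ℝ) (L U : ℝ) :
    lowerDen n p L U - secantDen n L U =
      ∑ i ∈ range n, (p (n+1+i) - 1) * L ^ (n-1-i) * U ^ i := by
  rw [lowerDen, secantDen, ← sum_sub_distrib]
  exact sum_congr rfl fun i _ => by ring

section Contracting

variable {n : ℕ} {p q : ℕ → ℝ} {L U : ℝ}

lemma Contracting.lowerOut_eq (hc : Contracting n p q) (hL : 0 < L) (hLU : L ≤ U) (x : ℝ) :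
    lowerOut n p L U x = L + (x - L ^ n) / lowerDen n p L U := by
  obtain ⟨h₁, h₂, -, -⟩ := hc L U L hL le_rfl hLU
  have hzero : (L ^ n + ∑ i ∈ range (n+1), p i * L ^ (n - i) * U ^ i) / lowerDen n p L U = 0 := by
    rw [lowerDen]
    unfold lowerOut at h₁ h₂
    linarith
  calc lowerOut n p L U x
      = L + ((x - L ^ n) / lowerDen n p L U
          + (L ^ n + ∑ i ∈ range (n+1), p i * L ^ (n - i) * U ^ i) / lowerDen n p L U) := by
        rw [lowerOut, lowerDen]; ring
    _ = L + (x - L ^ n) / lowerDen n p L U := by rw [hzero, add_zero]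

lemma Contracting.upperOut_eq (hc : Contracting n p q) (hL : 0 < L) (hLU : L ≤ U) (x : ℝ) :
    upperOut n q L U x = U + (x - U ^ n) / upperDen n q L U := by
  obtain ⟨-, -, h₁, h₂⟩ := hc L U U hL hLU le_rfl
  have hzero : (U ^ n + ∑ i ∈ range (n+1), q i * U ^ (n - i) * L ^ i) / upperDen n q L U = 0 := by
    rw [upperDen]
    unfold upperOut at h₁ h₂
    linarith
  calc upperOut n q L U x
      = U + ((x - U ^ n) / upperDen n q L U
          + (U ^ n + ∑ i ∈ range (n+1), q i * U ^ (n - i) * L ^ i) / upperDen n q L U) := by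
        rw [upperOut, upperDen]; ring
    _ = U + (x - U ^ n) / upperDen n q L U := by rw [hzero, add_zero]

lemma Contracting.secantDen_le_lowerDen (hc : Contracting n p q) (hn : n ≠ 0) (hL : 0 < L)
    (hLU : L < U) (hD : lowerDen n p L U ≠ 0) : secantDen n L U ≤ lowerDen n p L U := by
  obtain ⟨h₁, h₂, -, -⟩ := hc L U U hL hLU.le le_rfl
  rw [hc.lowerOut_eq hL hLU.le] at h₁ h₂
  have hgap : 0 < U ^ n - L ^ n := sub_pos.2 (pow_lt_pow_left₀ hLU hL.le hn)
  have hS := secantDen_pos hn hL (hL.trans hLU)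
  have hDpos : 0 < lowerDen n p L U :=
    hD.lt_or_gt.resolve_left fun h => by linarith [div_neg_of_pos_of_neg hgap h]
  have hsecant : (U ^ n - L ^ n) / secantDen n L U = U - L := by
    rw [← secantDen_mul_sub, mul_div_cancel_left₀ _ hS.ne']
  have hslope : (U ^ n - L ^ n) / lowerDen n p L U ≤ (U ^ n - L ^ n) / secantDen n L U := by
    rw [hsecant]
    linarith
  exact (div_le_div_iff_of_pos_left hgap hDpos hS).1 hslope

lemma Contracting.lowerOut_lt_secant {a : ℝ} (hc : Contracting n p q) (hn : n ≠ 0) (hL : 0 < L)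
    (hLa : L < a) (haU : a ≤ U) (hD : lowerDen n p L U ≠ secantDen n L U) :
    lowerOut n p L U (a ^ n) < L + (a ^ n - L ^ n) / secantDen n L U := by
  have hgap : 0 < a ^ n - L ^ n := sub_pos.2 (pow_lt_pow_left₀ hLa hL.le hn)
  have hS := secantDen_pos hn hL (hL.trans (hLa.trans_le haU))
  rw [hc.lowerOut_eq hL (hLa.le.trans haU)]
  rcases eq_or_ne (lowerDen n p L U) 0 with h0 | h0
  · rw [h0, div_zero, add_zero]
    linarith [div_pos hgap hS]
  · have hlt := (hc.secantDen_le_lowerDen hn hL (hLa.trans_le haU) h0).lt_of_ne hD.symm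
    linarith [div_lt_div_of_pos_left hgap hS hlt]

lemma Contracting.geom_sum₂_le_upperDen (hc : Contracting n p q) (hn : n ≠ 0) (hL : 0 < L)
    (hLU : L < U) (hE : upperDen n q L U ≠ 0) {b : ℝ} (hb : b ∈ Set.Ico L U) :
    ∑ i ∈ range n, b ^ i * U ^ (n-1-i) ≤ upperDen n q L U := by
  have hEpos : 0 < upperDen n q L U := by
    obtain ⟨-, -, -, h⟩ := hc L U L hL le_rfl hLU.le
    rw [hc.upperOut_eq hL hLU.le] at h
    have hgap : L ^ n - U ^ n < 0 := sub_neg.2 (pow_lt_pow_left₀ hLU hL.le hn)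
    exact hE.lt_or_gt.resolve_left fun h' => by linarith [div_pos_of_neg_of_neg hgap h']
  obtain ⟨-, -, h, -⟩ := hc L U b hL hb.1 hb.2.le
  rw [hc.upperOut_eq hL hLU.le, ← geom_sum₂_mul] at h
  set G := ∑ i ∈ range n, b ^ i * U ^ (n-1-i)
  have hscaled : (U - b) * (G / upperDen n q L U) ≤ (U - b) * 1 := by
    have : G * (b - U) / upperDen n q L U = -((U - b) * (G / upperDen n q L U)) := by ring
    linarith
  exact (div_le_one hEpos).1 (le_of_mul_le_mul_left hscaled (sub_pos.2 hb.2))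

lemma Contracting.newton_le_upperDen (hc : Contracting n p q) (hn : n ≠ 0) (hL : 0 < L)
    (hLU : L < U) (hE : upperDen n q L U ≠ 0) : (n : ℝ) * U ^ (n-1) ≤ upperDen n q L U := by
  have hclosed : IsClosed {b : ℝ | ∑ i ∈ range n, b ^ i * U ^ (n-1-i) ≤ upperDen n q L U} :=
    isClosed_le (by fun_prop) continuous_const
  have hU : U ∈ closure (Set.Ico L U) := by
    rw [closure_Ico hLU.ne]
    exact Set.right_mem_Icc.2 hLU.le
  have := hclosed.closure_subset_iff.2 (fun b hb => hc.geom_sum₂_le_upperDen hn hL hLU hE hb) hU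
  rwa [Set.mem_ofPred_eq, geom_sum₂_self] at this

lemma Contracting.newton_le_upperOut_s9 {a : ℝ} (hc : Contracting n p q) (hn : n ≠ 0) (hL : 0 < L)
    (hLa : L ≤ a) (haU : a ≤ U) (hLU : L < U) :
    U + (a ^ n - U ^ n) / ((n : ℝ) * U ^ (n-1)) ≤ upperOut n q L U (a ^ n) := by
  have hgap : a ^ n - U ^ n ≤ 0 := sub_nonpos.2 (pow_le_pow_left₀ (hL.le.trans hLa) haU n)
  have hN : 0 < (n : ℝ) * U ^ (n-1) := by
    have := Nat.pos_of_ne_zero hn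
    have := hL.trans hLU
    positivity
  rw [hc.upperOut_eq hL hLU.le]
  rcases eq_or_ne (upperDen n q L U) 0 with h0 | h0
  · rw [h0, div_zero, add_zero]
    linarith [div_nonpos_of_nonpos_of_nonneg hgap hN.le]
  · have := div_le_div_of_nonneg_left (neg_nonneg.2 hgap) hN (hc.newton_le_upperDen hn hL hLU h0)
    rw [neg_div, neg_div] at this
    linarith

end Contracting

theorem secant_newton_strictly_better_lower_general (n : ℕ) (p q : ℕ → ℝ)
    (hc : Contracting n p q) :
    ∀ L U a : ℝ, 0 < L → L ≤ a → a ≤ U →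
      (a ^ n - L ^ n) * (∑ i ∈ Finset.range n, (p (n+1+i) - 1) * L ^ (n-1-i) * U ^ i) ≠ 0 →
      lowerOut n p L U (a ^ n) <
        L + (a ^ n - L ^ n) / (∑ i ∈ Finset.range n, L ^ (n-1-i) * U ^ i) ∧
      Set.Icc (L + (a ^ n - L ^ n) / (∑ i ∈ Finset.range n, L ^ (n-1-i) * U ^ i))
              (U + (a ^ n - U ^ n) / ((n : ℝ) * U ^ (n-1))) ⊂
        Set.Icc (lowerOut n p L U (a ^ n)) (upperOut n q L U (a ^ n)) := by
  intro L U a hL hLa haU hne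
  obtain ⟨hx, hden⟩ := mul_ne_zero_iff.1 hne
  have hn : n ≠ 0 := by
    rintro rfl
    simp at hx
  have hLa' : L < a := hLa.lt_of_ne (by rintro rfl; simp at hx)
  have hD : lowerDen n p L U ≠ secantDen n L U :=
    sub_ne_zero.1 (by rwa [lowerDen_sub_secantDen])
  have hlow := hc.lowerOut_lt_secant hn hL hLa' haU hD
  have hup := hc.newton_le_upperOut_s9 hn hL hLa haU (hLa'.trans_le haU)
  obtain ⟨-, hl, hu, -⟩ := hc L U a hL hLa haU
  exact ⟨hlow, Set.Icc_ssubset_Icc_left (hl.trans hu) hlow hup⟩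

theorem secant_newton_strictly_better_lower (n : ℕ) (hn : 2 ≤ n) (p q : ℕ → ℝ)
    (hc : Contracting n p q) (hp : ∃ i < n, p (n+1+i) ≠ 1) :
    ∀ L U a : ℝ, 0 < L → L ≤ a → a ≤ U →
      (a ^ n - L ^ n) * (∑ i ∈ Finset.range n, (p (n+1+i) - 1) * L ^ (n-1-i) * U ^ i) ≠ 0 →
      lowerOut n p L U (a ^ n) <
        L + (a ^ n - L ^ n) / (∑ i ∈ Finset.range n, L ^ (n-1-i) * U ^ i) ∧
      Set.Icc (L + (a ^ n - L ^ n) / (∑ i ∈ Finset.range n, L ^ (n-1-i) * U ^ i))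
              (U + (a ^ n - U ^ n) / ((n : ℝ) * U ^ (n-1))) ⊂
        Set.Icc (lowerOut n p L U (a ^ n)) (upperOut n q L U (a ^ n)) :=
  secant_newton_strictly_better_lower_general n p q hc
end

section
/- Let n ≥ 2 be an integer and let p = (p_0,…,p_{2n}) and q = (q_0,…,q_{2n}) be real coefficient vectors such that the n-th degree map R_{p,q} is contracting and R_{p,q} is not the Secant–Newton map (i.e. p ≠ p* or q ≠ q*, where p* = (−1,0,…,0,1,…,1) with n zeros followed by n ones, and q* = (−1,0,…,0,n,0,…,0) with n zeros before the entry n and n−1 zeros after). Then the set of triples (L, U, a) ∈ ℝ³ with 0 < L ≤ a ≤ U for which the output interval of R_{p,q} on ([L,U], a^n) equals the output interval of the Secant–Newton map has Lebesgue measure zero in ℝ³; consequently, for almost every (L, U, a) with 0 < L ≤ a ≤ U, the Secant–Newton output interval is a proper subset of the output interval of R_{p,q}. -/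
/-- The coefficient vector `p*` of the Secant–Newton map:
`p* = (-1, 0,…,0, 1,…,1)` with `n` zeros and `n` ones. -/
noncomputable def pstar (n : ℕ) : ℕ → ℝ :=
  fun i => if i = 0 then -1 else if i ≤ n then 0 else 1

/-- The coefficient vector `q*` of the Secant–Newton map:
`q* = (-1, 0,…,0, n, 0,…,0)` with `n` zeros before `n` and `n-1` zeros after. -/
noncomputable def qstar (n : ℕ) : ℕ → ℝ :=
  fun i => if i = 0 then -1 else if i = n + 1 then (n : ℝ) else 0

open Finset MeasureTheory Set Polynomial

noncomputable def endpointNum (n : ℕ) (p : ℕ → ℝ) (c d : ℝ) : ℝ :=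
  ∑ i ∈ range (n + 1), p i * c ^ (n - i) * d ^ i

noncomputable def endpointDen (n : ℕ) (p : ℕ → ℝ) (c d : ℝ) : ℝ :=
  ∑ i ∈ range n, p (n + 1 + i) * c ^ (n - 1 - i) * d ^ i

noncomputable def secantSlope (n : ℕ) (s t : ℝ) : ℝ :=
  ∑ i ∈ range n, s ^ (n - 1 - i) * t ^ i

theorem lowerOut_eq (n : ℕ) (p : ℕ → ℝ) (c d x : ℝ) :
    lowerOut n p c d x = c + (x + endpointNum n p c d) / endpointDen n p c d := rfl

/-- The upper update is the lower update with the roles of the endpoints swapped, so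
`lowerOut n p c d` is read as the update of an endpoint `c` whose partner endpoint is `d`. -/
theorem upperOut_eq_lowerOut (n : ℕ) (q : ℕ → ℝ) (L U x : ℝ) :
    upperOut n q L U x = lowerOut n q U L x := rfl

theorem endpointNum_sub (n : ℕ) (p p' : ℕ → ℝ) (c d : ℝ) :
    endpointNum n (p - p') c d = endpointNum n p c d - endpointNum n p' c d := by
  simp only [endpointNum, Pi.sub_apply, sub_mul, sum_sub_distrib]

theorem endpointDen_sub (n : ℕ) (p p' : ℕ → ℝ) (c d : ℝ) :
    endpointDen n (p - p') c d = endpointDen n p c d - endpointDen n p' c d := by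
  simp only [endpointDen, Pi.sub_apply, sub_mul, sum_sub_distrib]

theorem endpointNum_eq_neg_pow {n : ℕ} {p : ℕ → ℝ} (h0 : p 0 = -1)
    (h : ∀ i, 0 < i → i ≤ n → p i = 0) (c d : ℝ) : endpointNum n p c d = -c ^ n := by
  rw [endpointNum, sum_eq_single 0 (fun i hi hi0 => ?_) (by simp)]
  · simp [h0]
  · rw [h i (Nat.pos_of_ne_zero hi0) (Nat.lt_succ_iff.mp (mem_range.mp hi))]
    ring

theorem secantSlope_mul_sub (n : ℕ) (s t : ℝ) : secantSlope n s t * (t - s) = t ^ n - s ^ n := by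
  rw [← geom_sum₂_mul, secantSlope]
  simp_rw [mul_comm (s ^ _)]

theorem secantSlope_self (n : ℕ) (t : ℝ) : secantSlope n t t = n * t ^ (n - 1) := by
  rw [secantSlope, sum_congr rfl fun i hi => ?_, sum_const, card_range, nsmul_eq_mul]
  rw [← pow_add]
  have := mem_range.mp hi
  congr 1
  omega

theorem secantSlope_pos {n : ℕ} (hn : n ≠ 0) {s t : ℝ} (hs : 0 < s) (ht : 0 < t) :
    0 < secantSlope n s t :=
  sum_pos (fun i _ => by positivity) (nonempty_range_iff.mpr hn)

theorem continuous_secantSlope_left (n : ℕ) (t : ℝ) : Continuous fun s => secantSlope n s t := by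
  unfold secantSlope
  fun_prop

theorem secantSlope_mul_le_one {n : ℕ} {s t κ : ℝ} (hst : s < t)
    (h : (t ^ n - s ^ n) * κ ≤ t - s) : secantSlope n s t * κ ≤ 1 := by
  rw [← secantSlope_mul_sub, mul_right_comm] at h
  exact le_of_mul_le_mul_right (by linarith) (sub_pos.mpr hst)

theorem endpointNum_pstar (n : ℕ) (c d : ℝ) : endpointNum n (pstar n) c d = -c ^ n :=
  endpointNum_eq_neg_pow (by simp [pstar]) (fun i hi hin => by simp [pstar, hi.ne', hin]) c d

theorem endpointNum_qstar (n : ℕ) (c d : ℝ) : endpointNum n (qstar n) c d = -c ^ n :=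
  endpointNum_eq_neg_pow (by simp [qstar]) (fun i hi hin => by simp [qstar, hi.ne']; omega) c d

theorem endpointDen_pstar (n : ℕ) (c d : ℝ) : endpointDen n (pstar n) c d = secantSlope n c d := by
  refine sum_congr rfl fun i _ => ?_
  simp [pstar, show ¬n + 1 + i ≤ n by omega]

theorem endpointDen_qstar (n : ℕ) (c d : ℝ) : endpointDen n (qstar n) c d = secantSlope n c c := by
  rw [secantSlope_self, endpointDen, sum_eq_single 0 (fun i _ hi0 => by simp [qstar, hi0])
    (fun h => by simp_all [qstar])]
  simp [qstar]

theorem lowerOut_pstar (n : ℕ) (L U x : ℝ) :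
    lowerOut n (pstar n) L U x = L + (x - L ^ n) * (secantSlope n L U)⁻¹ := by
  rw [lowerOut_eq, endpointNum_pstar, endpointDen_pstar, ← sub_eq_add_neg, div_eq_mul_inv]

theorem upperOut_qstar (n : ℕ) (L U x : ℝ) :
    upperOut n (qstar n) L U x = U + (x - U ^ n) * (secantSlope n U U)⁻¹ := by
  rw [upperOut_eq_lowerOut, lowerOut_eq, endpointNum_qstar, endpointDen_qstar, ← sub_eq_add_neg,
    div_eq_mul_inv]

section Endpoint

variable {n : ℕ} {p : ℕ → ℝ} {c d : ℝ}

theorem lowerOut_eq_of_fixed (hfix : lowerOut n p c d (c ^ n) = c) (x : ℝ) :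
    lowerOut n p c d x = c + (x - c ^ n) * (endpointDen n p c d)⁻¹ := by
  rw [lowerOut_eq] at hfix ⊢
  rcases div_eq_zero_iff.mp (by linarith : (c ^ n + endpointNum n p c d) / endpointDen n p c d = 0)
    with hN | hD
  · rw [div_eq_mul_inv, show x + endpointNum n p c d = x - c ^ n by linarith]
  · simp [hD]

theorem endpoint_eq_of_lowerOut_eq (hfix : lowerOut n p c d (c ^ n) = c) {x k : ℝ}
    (hx : x ≠ c ^ n) (hk : k ≠ 0) (h : lowerOut n p c d x = c + (x - c ^ n) * k⁻¹) :
    endpointNum n p c d = -c ^ n ∧ endpointDen n p c d = k := by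
  rw [lowerOut_eq_of_fixed hfix] at h
  have hD : endpointDen n p c d = k :=
    inv_injective (mul_left_cancel₀ (sub_ne_zero.mpr hx) (add_left_cancel h))
  rw [lowerOut_eq, hD, add_eq_left, div_eq_zero_iff, or_iff_left hk] at hfix
  exact ⟨by linarith, hD⟩

end Endpoint

theorem volume_setOf_sum_eq_zero {s : Finset ℕ} {c : ℕ → ℝ} (e : ℕ → ℕ) (h : ∃ i ∈ s, c i ≠ 0) :
    volume {w : ℝ × ℝ | ∑ i ∈ s, c i * w.1 ^ e i * w.2 ^ i = 0} = 0 := by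
  obtain ⟨i, hi, hci⟩ := h
  rw [Measure.volume_eq_prod,
    Measure.measure_prod_null (measurableSet_eq_fun (by fun_prop) measurable_const)]
  filter_upwards [compl_mem_ae_iff.mpr (measure_singleton (0 : ℝ))] with x (hx : x ≠ 0)
  let P : ℝ[X] := ∑ j ∈ s, C (c j * x ^ e j) * X ^ j
  have hPi : P.coeff i = c i * x ^ e i := by
    simp only [P, finsetSum_coeff, coeff_C_mul_X_pow, sum_ite_eq, if_pos hi]
  have hP : P ≠ 0 := fun h0 => mul_ne_zero hci (pow_ne_zero _ hx) (by rw [← hPi, h0, coeff_zero])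
  have hslice : Prod.mk x ⁻¹' {w : ℝ × ℝ | ∑ i ∈ s, c i * w.1 ^ e i * w.2 ^ i = 0} =
      {y | P.IsRoot y} := by
    ext y
    simp [P, eval_finsetSum]
  rw [hslice]
  exact (finite_setOfPred_isRoot hP).measure_zero _

theorem volume_setOf_endpoint_eq {n : ℕ} {p p' : ℕ → ℝ} (h : ∃ i ≤ 2 * n, p i ≠ p' i) :
    volume {w : ℝ × ℝ | endpointNum n p w.1 w.2 = endpointNum n p' w.1 w.2 ∧
      endpointDen n p w.1 w.2 = endpointDen n p' w.1 w.2} = 0 := by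
  obtain ⟨i, hi, hpi⟩ := h
  rcases le_or_gt i n with hin | hin
  · refine measure_mono_null (fun w hw => ?_) (volume_setOf_sum_eq_zero (s := range (n + 1))
      (c := p - p') (fun j => n - j) ⟨i, mem_range.mpr (by omega), sub_ne_zero.mpr hpi⟩)
    exact (endpointNum_sub n p p' w.1 w.2).trans (sub_eq_zero.mpr hw.1)
  · refine measure_mono_null (fun w hw => ?_) (volume_setOf_sum_eq_zero (s := range n)
      (c := fun j => (p - p') (n + 1 + j)) (fun j => n - 1 - j)
      ⟨i - (n + 1), mem_range.mpr (by omega),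
        by rwa [Pi.sub_apply, show n + 1 + (i - (n + 1)) = i by omega, sub_ne_zero]⟩)
    exact (endpointDen_sub n p p' w.1 w.2).trans (sub_eq_zero.mpr hw.2)

theorem volume_setOf_endpoint_eq_swap {n : ℕ} {p p' : ℕ → ℝ} (h : ∃ i ≤ 2 * n, p i ≠ p' i) :
    volume {w : ℝ × ℝ | endpointNum n p w.2 w.1 = endpointNum n p' w.2 w.1 ∧
      endpointDen n p w.2 w.1 = endpointDen n p' w.2 w.1} = 0 := by
  refine (Measure.measurePreserving_swap.measure_preimage_emb
    MeasurableEquiv.prodComm.measurableEmbedding _).symm.trans ?_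
  exact volume_setOf_endpoint_eq h

theorem volume_setOf_mem_or_eq_or_eq {Z : Set (ℝ × ℝ)} (hZ : volume Z = 0) :
    volume {v : ℝ × ℝ × ℝ | (v.1, v.2.1) ∈ Z ∨ v.2.2 = v.1 ∨ v.2.2 = v.2.1} = 0 := by
  refine ((measurePreserving_prodAssoc volume volume volume).measure_preimage_equiv _).symm.trans ?_
  refine measure_mono_null (t := Z ×ˢ univ ∪ {w | w.2 = w.1.1 ∨ w.2 = w.1.2})
    (fun w hw => ?_) (measure_union_null ?_ ?_)
  · rcases hw with hw | hw
    exacts [Or.inl ⟨hw, trivial⟩, Or.inr hw]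
  · rw [Measure.prod_prod, ← Measure.volume_eq_prod, hZ, zero_mul]
  · rw [Measure.measure_prod_null (by measurability)]
    exact Filter.Eventually.of_forall fun w => (toFinite {w.1, w.2}).measure_zero _

theorem volume_setOf_endpoint_eq_and {n : ℕ} {p p' q q' : ℕ → ℝ}
    (h : ∃ i ≤ 2 * n, p i ≠ p' i ∨ q i ≠ q' i) :
    volume {w : ℝ × ℝ | (endpointNum n p w.1 w.2 = endpointNum n p' w.1 w.2 ∧
      endpointDen n p w.1 w.2 = endpointDen n p' w.1 w.2) ∧
      (endpointNum n q w.2 w.1 = endpointNum n q' w.2 w.1 ∧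
      endpointDen n q w.2 w.1 = endpointDen n q' w.2 w.1)} = 0 := by
  obtain ⟨i, hi, hp | hq⟩ := h
  · exact measure_mono_null (fun w hw => hw.1) (volume_setOf_endpoint_eq ⟨i, hi, hp⟩)
  · exact measure_mono_null (fun w hw => hw.2) (volume_setOf_endpoint_eq_swap ⟨i, hi, hq⟩)

section Contracting

variable {n : ℕ} {p q : ℕ → ℝ} {L U a : ℝ}

theorem Contracting.lowerOut_fixed (hc : Contracting n p q) (hL : 0 < L) (hLU : L ≤ U) :
    lowerOut n p L U (L ^ n) = L :=
  le_antisymm (hc L U L hL le_rfl hLU).2.1 (hc L U L hL le_rfl hLU).1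

theorem Contracting.upperOut_fixed (hc : Contracting n p q) (hL : 0 < L) (hLU : L ≤ U) :
    upperOut n q L U (U ^ n) = U :=
  le_antisymm (hc L U U hL hLU le_rfl).2.2.2 (hc L U U hL hLU le_rfl).2.2.1

theorem Contracting.inv_endpointDen_le_inv_secantSlope (hc : Contracting n p q) (hn : n ≠ 0)
    (hL : 0 < L) (hLU : L < U) : (endpointDen n p L U)⁻¹ ≤ (secantSlope n L U)⁻¹ := by
  have h := (hc L U U hL hLU.le le_rfl).2.1
  rw [lowerOut_eq_of_fixed (hc.lowerOut_fixed hL hLU.le)] at h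
  rw [← one_div (secantSlope n L U), le_div_iff₀' (secantSlope_pos hn hL (hL.trans hLU))]
  exact secantSlope_mul_le_one hLU (by linarith)

theorem Contracting.inv_endpointDen_le_inv_secantSlope_self (hc : Contracting n p q)
    (hn : n ≠ 0) (hL : 0 < L) (hLU : L < U) : (endpointDen n q U L)⁻¹ ≤ (secantSlope n U U)⁻¹ := by
  have hIco : ∀ a ∈ Ico L U, secantSlope n a U * (endpointDen n q U L)⁻¹ ≤ 1 := by
    rintro a ⟨hLa, haU⟩
    have h := (hc L U a hL hLa haU.le).2.2.1
    rw [upperOut_eq_lowerOut, lowerOut_eq_of_fixed (hc.upperOut_fixed hL hLU.le)] at h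
    exact secantSlope_mul_le_one haU (by linarith)
  have hU : U ∈ closure (Ico L U) := by
    rw [closure_Ico hLU.ne]
    exact right_mem_Icc.mpr hLU.le
  have hNewton : secantSlope n U U * (endpointDen n q U L)⁻¹ ≤ 1 :=
    (isClosed_le ((continuous_secantSlope_left n U).mul continuous_const)
      continuous_const).closure_subset_iff.mpr hIco hU
  have hU0 : 0 < U := hL.trans hLU
  rwa [← one_div (secantSlope n U U), le_div_iff₀' (secantSlope_pos hn hU0 hU0)]

theorem Contracting.lowerOut_le_lowerOut_pstar (hc : Contracting n p q) (hn : n ≠ 0) (hL : 0 < L)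
    (hLa : L ≤ a) (haU : a ≤ U) :
    lowerOut n p L U (a ^ n) ≤ lowerOut n (pstar n) L U (a ^ n) := by
  rw [lowerOut_eq_of_fixed (hc.lowerOut_fixed hL (hLa.trans haU)), lowerOut_pstar]
  rcases hLa.eq_or_lt with rfl | hLa
  · simp
  gcongr L + ?_
  exact mul_le_mul_of_nonneg_left
    (hc.inv_endpointDen_le_inv_secantSlope hn hL (hLa.trans_le haU))
    (sub_nonneg.mpr (pow_le_pow_left₀ hL.le hLa.le n))

theorem Contracting.upperOut_qstar_le_upperOut (hc : Contracting n p q) (hn : n ≠ 0) (hL : 0 < L)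
    (hLa : L ≤ a) (haU : a ≤ U) :
    upperOut n (qstar n) L U (a ^ n) ≤ upperOut n q L U (a ^ n) := by
  rw [upperOut_qstar, upperOut_eq_lowerOut,
    lowerOut_eq_of_fixed (hc.upperOut_fixed hL (hLa.trans haU))]
  rcases haU.eq_or_lt with rfl | haU
  · simp
  gcongr U + ?_
  exact mul_le_mul_of_nonpos_left
    (hc.inv_endpointDen_le_inv_secantSlope_self hn hL (hLa.trans_lt haU))
    (sub_nonpos.mpr (pow_le_pow_left₀ (hL.le.trans hLa) haU.le n))

theorem Contracting.endpoint_eq_pstar_of_lowerOut_eq (hc : Contracting n p q) (hn : n ≠ 0)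
    (hL : 0 < L) (hLa : L < a) (haU : a ≤ U)
    (h : lowerOut n p L U (a ^ n) = lowerOut n (pstar n) L U (a ^ n)) :
    endpointNum n p L U = endpointNum n (pstar n) L U ∧
      endpointDen n p L U = endpointDen n (pstar n) L U := by
  rw [lowerOut_pstar] at h
  rw [endpointNum_pstar, endpointDen_pstar]
  exact endpoint_eq_of_lowerOut_eq (hc.lowerOut_fixed hL (hLa.le.trans haU))
    (pow_lt_pow_left₀ hLa hL.le hn).ne' (secantSlope_pos hn hL (by linarith)).ne' h

theorem Contracting.endpoint_eq_qstar_of_upperOut_eq (hc : Contracting n p q) (hn : n ≠ 0)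
    (hL : 0 < L) (hLa : L ≤ a) (haU : a < U)
    (h : upperOut n q L U (a ^ n) = upperOut n (qstar n) L U (a ^ n)) :
    endpointNum n q U L = endpointNum n (qstar n) U L ∧
      endpointDen n q U L = endpointDen n (qstar n) U L := by
  rw [upperOut_qstar] at h
  rw [endpointNum_qstar, endpointDen_qstar]
  exact endpoint_eq_of_lowerOut_eq (hc.upperOut_fixed hL (hLa.trans haU.le))
    (pow_lt_pow_left₀ haU (hL.le.trans hLa) hn).ne
    (secantSlope_pos hn (by linarith) (by linarith)).ne' h

theorem Contracting.volume_setOf_out_eq_star (hc : Contracting n p q) (hn : n ≠ 0)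
    (hne : ∃ i ≤ 2 * n, p i ≠ pstar n i ∨ q i ≠ qstar n i) :
    volume {v : ℝ × ℝ × ℝ | 0 < v.1 ∧ v.1 ≤ v.2.2 ∧ v.2.2 ≤ v.2.1 ∧
      lowerOut n p v.1 v.2.1 (v.2.2 ^ n) = lowerOut n (pstar n) v.1 v.2.1 (v.2.2 ^ n) ∧
      upperOut n q v.1 v.2.1 (v.2.2 ^ n) = upperOut n (qstar n) v.1 v.2.1 (v.2.2 ^ n)} = 0 := by
  refine measure_mono_null ?_ (volume_setOf_mem_or_eq_or_eq (volume_setOf_endpoint_eq_and hne))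
  rintro ⟨L, U, a⟩ ⟨hL, hLa, haU, hlow, hupp⟩
  rcases hLa.eq_or_lt with hLa | hLa
  · exact Or.inr (Or.inl hLa.symm)
  rcases haU.eq_or_lt with haU | haU
  · exact Or.inr (Or.inr haU)
  exact Or.inl ⟨hc.endpoint_eq_pstar_of_lowerOut_eq hn hL hLa haU.le hlow,
    hc.endpoint_eq_qstar_of_upperOut_eq hn hL hLa.le haU hupp⟩

theorem Contracting.Icc_pstar_qstar_ssubset (hc : Contracting n p q) (hn : n ≠ 0)
    (hL : 0 < L) (hLa : L ≤ a) (haU : a ≤ U)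
    (hne : ¬(lowerOut n p L U (a ^ n) = lowerOut n (pstar n) L U (a ^ n) ∧
      upperOut n q L U (a ^ n) = upperOut n (qstar n) L U (a ^ n))) :
    Icc (lowerOut n (pstar n) L U (a ^ n)) (upperOut n (qstar n) L U (a ^ n)) ⊂
      Icc (lowerOut n p L U (a ^ n)) (upperOut n q L U (a ^ n)) := by
  refine (Icc_subset_Icc (hc.lowerOut_le_lowerOut_pstar hn hL hLa haU)
    (hc.upperOut_qstar_le_upperOut hn hL hLa haU)).ssubset_of_ne fun heq => hne ?_
  have hbounds := hc L U a hL hLa haU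
  exact (Icc_eq_Icc_iff (hbounds.2.1.trans hbounds.2.2.1)).mp heq.symm

end Contracting

theorem secant_newton_almost_always_better (n : ℕ) (hn : 2 ≤ n) (p q : ℕ → ℝ)
    (hc : Contracting n p q)
    (hne : ∃ i ≤ 2 * n, p i ≠ pstar n i ∨ q i ≠ qstar n i) :
    MeasureTheory.volume {v : ℝ × ℝ × ℝ |
      0 < v.1 ∧ v.1 ≤ v.2.2 ∧ v.2.2 ≤ v.2.1 ∧
      lowerOut n p v.1 v.2.1 (v.2.2 ^ n) = lowerOut n (pstar n) v.1 v.2.1 (v.2.2 ^ n) ∧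
      upperOut n q v.1 v.2.1 (v.2.2 ^ n) = upperOut n (qstar n) v.1 v.2.1 (v.2.2 ^ n)} = 0 ∧
    ∀ᵐ v : ℝ × ℝ × ℝ ∂MeasureTheory.volume,
      (0 < v.1 ∧ v.1 ≤ v.2.2 ∧ v.2.2 ≤ v.2.1) →
      Set.Icc (lowerOut n (pstar n) v.1 v.2.1 (v.2.2 ^ n))
              (upperOut n (qstar n) v.1 v.2.1 (v.2.2 ^ n)) ⊂
        Set.Icc (lowerOut n p v.1 v.2.1 (v.2.2 ^ n))
                (upperOut n q v.1 v.2.1 (v.2.2 ^ n)) := by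
  have hn0 : n ≠ 0 := by omega
  have hE := hc.volume_setOf_out_eq_star hn0 hne
  refine ⟨hE, (measure_eq_zero_iff_ae_notMem.mp hE).mono fun v hv ⟨hL, hLa, haU⟩ => ?_⟩
  exact hc.Icc_pstar_qstar_ssubset hn0 hL hLa haU fun ⟨hlow, hupp⟩ =>
    hv ⟨hL, hLa, haU, hlow, hupp⟩
end
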